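/- Let x : [0,1] → ℝⁿ be an H¹ curve and let g0 be a (constant) positive definite inner product on ℝⁿ, δ ∈ ℝⁿ, β > 0, with g̃0 = g0/β. Define T₊(x) = ∫₀¹ ( g̃0(δ, ẋ) + sqrt( g̃0(δ,ẋ)² + g̃0(ẋ,ẋ) ) ) ds and T̃₊(x) = ∫₀¹ g̃0(δ,ẋ) ds + sqrt( (∫₀¹ (g0(ẋ,ẋ) + g̃0(δ,ẋ) g0(δ,ẋ)) ds) · ∫₀¹ (1/β) ds ). Then T₊(x) ≤ T̃₊(x). -/

import Mathlib

/-!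
The `g̃0(δ, ẋ)` terms on both sides cancel, and the integrand of the second integral of `T̃₊` is
`β` times the radicand `g̃0(δ,ẋ)² + g̃0(ẋ,ẋ)` of `T₊`, which is nonnegative because `g0` is
positive definite. What remains is `∫₀¹ √u ≤ √(∫₀¹ u)`: Jensen's inequality for the concave
square root on the probability space `[0,1]` (equivalently, Cauchy–Schwarz against `1`).
-/

open MeasureTheory

theorem integral_sqrt_le_sqrt_integral {α : Type*} [MeasurableSpace α] (μ : Measure α)
    [IsProbabilityMeasure μ] {u : α → ℝ} (hu : 0 ≤ᵐ[μ] u) (hui : Integrable u μ)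
    (hsi : Integrable (fun a => √(u a)) μ) :
    ∫ a, √(u a) ∂μ ≤ √(∫ a, u a ∂μ) :=
  Real.strictConcaveOn_sqrt.concaveOn.le_map_integral Real.continuous_sqrt.continuousOn
    isClosed_Ici hu hui hsi

theorem intervalIntegral_sqrt_le_sqrt_intervalIntegral {u : ℝ → ℝ} (hu : ∀ s, 0 ≤ u s)
    (hui : IntervalIntegrable u volume 0 1)
    (hsi : IntervalIntegrable (fun s => √(u s)) volume 0 1) :
    ∫ s in (0:ℝ)..1, √(u s) ≤ √(∫ s in (0:ℝ)..1, u s) := by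
  have : IsProbabilityMeasure (volume.restrict (Set.Ioc (0:ℝ) 1)) :=
    ⟨by simp [Measure.restrict_apply]⟩
  rw [intervalIntegral.integral_of_le zero_le_one, intervalIntegral.integral_of_le zero_le_one]
  exact integral_sqrt_le_sqrt_integral _ (.of_forall hu) hui.1 hsi.1

theorem Tplus_le_Ttildeplus_general {n : ℕ}
    (g0 : EuclideanSpace ℝ (Fin n) →ₗ[ℝ] EuclideanSpace ℝ (Fin n) →ₗ[ℝ] ℝ)
    (hpos : ∀ y, y ≠ 0 → 0 < g0 y y)
    (δ : EuclideanSpace ℝ (Fin n)) (β : ℝ) (hβ : 0 < β)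
    (x' : ℝ → EuclideanSpace ℝ (Fin n))
    (hint1 : IntervalIntegrable (fun s => g0 δ (x' s) / β) volume 0 1)
    (hint2 : IntervalIntegrable
      (fun s => Real.sqrt ((g0 δ (x' s) / β) ^ 2 + g0 (x' s) (x' s) / β)) volume 0 1)
    (hint3 : IntervalIntegrable
      (fun s => g0 (x' s) (x' s) + (g0 δ (x' s) / β) * g0 δ (x' s)) volume 0 1) :
    (∫ s in (0:ℝ)..1,
        (g0 δ (x' s) / β + Real.sqrt ((g0 δ (x' s) / β) ^ 2 + g0 (x' s) (x' s) / β)))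
      ≤ (∫ s in (0:ℝ)..1, g0 δ (x' s) / β)
        + Real.sqrt
            ((∫ s in (0:ℝ)..1, (g0 (x' s) (x' s) + (g0 δ (x' s) / β) * g0 δ (x' s)))
              * (1 / β)) := by
  set u : ℝ → ℝ := fun s => (g0 δ (x' s) / β) ^ 2 + g0 (x' s) (x' s) / β
  have hg0_nonneg : ∀ y, 0 ≤ g0 y y := fun y => by
    rcases eq_or_ne y 0 with rfl | hy
    · simp
    · exact (hpos y hy).le
  have hu_nonneg : ∀ s, 0 ≤ u s :=
    fun s => add_nonneg (sq_nonneg _) (div_nonneg (hg0_nonneg _) hβ.le)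
  have hu_eq : ∀ s, (g0 (x' s) (x' s) + (g0 δ (x' s) / β) * g0 δ (x' s)) / β = u s := by
    intro s
    simp only [u]
    field_simp
    ring
  have hui : IntervalIntegrable u volume 0 1 := by
    simpa only [hu_eq] using hint3.div_const β
  rw [intervalIntegral.integral_add hint1 hint2, mul_one_div,
    ← intervalIntegral.integral_div, intervalIntegral.integral_congr (fun s _ => hu_eq s)]
  gcongr
  exact intervalIntegral_sqrt_le_sqrt_intervalIntegral hu_nonneg hui hint2

/-- the inequality `T₊(x) ≤ T̃₊(x)` (formula (stimo) of the paper) for an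
`H¹` curve `x : [0,1] → ℝⁿ` with constant coefficients `g0, δ, β` and `g̃0 = g0/β`. -/
theorem Tplus_le_Ttildeplus {n : ℕ}
    (g0 : EuclideanSpace ℝ (Fin n) →ₗ[ℝ] EuclideanSpace ℝ (Fin n) →ₗ[ℝ] ℝ)
    (hsymm : ∀ x y, g0 x y = g0 y x)
    (hpos : ∀ y, y ≠ 0 → 0 < g0 y y)
    (δ : EuclideanSpace ℝ (Fin n)) (β : ℝ) (hβ : 0 < β)
    (x x' : ℝ → EuclideanSpace ℝ (Fin n))
    (hx : ∀ s ∈ Set.Icc (0 : ℝ) 1, HasDerivAt x (x' s) s)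
    (hint1 : IntervalIntegrable (fun s => g0 δ (x' s) / β) volume 0 1)
    (hint2 : IntervalIntegrable
      (fun s => Real.sqrt ((g0 δ (x' s) / β) ^ 2 + g0 (x' s) (x' s) / β)) volume 0 1)
    (hint3 : IntervalIntegrable
      (fun s => g0 (x' s) (x' s) + (g0 δ (x' s) / β) * g0 δ (x' s)) volume 0 1) :
    (∫ s in (0:ℝ)..1,
        (g0 δ (x' s) / β + Real.sqrt ((g0 δ (x' s) / β) ^ 2 + g0 (x' s) (x' s) / β)))
      ≤ (∫ s in (0:ℝ)..1, g0 δ (x' s) / β)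
        + Real.sqrt
            ((∫ s in (0:ℝ)..1, (g0 (x' s) (x' s) + (g0 δ (x' s) / β) * g0 δ (x' s)))
              * (1 / β)) :=
  Tplus_le_Ttildeplus_general g0 hpos δ β hβ x' hint1 hint2 hint3
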